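/- arXiv:2509.01384 — 3 statements merged into one kernel-verified Lean document; each statement's English description precedes it below -/
import Mathlib

section
/- Let K be a simplicial complex and S ⊆ K. Then S is a cosimplicial complex if and only if S is the intersection of a set open for K and a set closed for K. -/
open Finset

abbrev Simplex : Type := Finset ℕ
abbrev Cplx : Type := Finset (Finset ℕ)

/-- A simplicial complex: a finite set of nonempty finite sets closed under
taking nonempty subsets. -/
def IsSimpComplex (K : Cplx) : Prop :=
  (∀ τ ∈ K, τ.Nonempty) ∧ ∀ τ ∈ K, ∀ σ : Simplex, σ ⊆ τ → σ.Nonempty → σ ∈ K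

/-- A cosimplicial complex: for all σ, τ ∈ S, every ν with σ ⊆ ν ⊆ τ is in S. -/
def IsCosimplicial (S : Cplx) : Prop :=
  ∀ σ ∈ S, ∀ τ ∈ S, ∀ ν : Simplex, σ ⊆ ν → ν ⊆ τ → ν ∈ S

/-- S is open for K. -/
def IsOpenFor (K S : Cplx) : Prop :=
  S ⊆ K ∧ ∀ σ ∈ S, ∀ τ ∈ K, σ ⊆ τ → τ ∈ S

/-- S is closed for K. -/
def IsClosedFor (K S : Cplx) : Prop :=
  S ⊆ K ∧ IsSimpComplex S

/-- Closure of a finite set of simplexes: all nonempty subsets of members. -/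
def cl (S : Cplx) : Cplx :=
  S.biUnion fun τ => τ.powerset.filter fun σ => σ.Nonempty

/-- (σ, τ) is a free pair for K: τ is the only face of K properly containing σ. -/
def IsFreePair (K : Cplx) (σ τ : Simplex) : Prop :=
  σ ∈ K ∧ τ ∈ K ∧ σ ⊂ τ ∧ ∀ ρ ∈ K, σ ⊂ ρ → ρ = τ

/-- K' is an elementary expansion of K. -/
def ElemExpansion (K' K : Cplx) : Prop :=
  ∃ σ τ : Simplex, σ ∉ K ∧ τ ∉ K ∧ K' = K ∪ {σ, τ} ∧ IsFreePair K' σ τ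

/-- K' is an elementary filling of K: K' = K ∪ {ν} with ν a facet of K'. -/
def ElemFilling (K' K : Cplx) : Prop :=
  ∃ ν : Simplex, ν ∉ K ∧ K' = insert ν K ∧ ∀ ρ ∈ K', ν ⊆ ρ → ρ = ν

/-- A collapses onto B: a sequence of elementary collapses from A to B. -/
def Collapses (A B : Cplx) : Prop :=
  Relation.ReflTransGen (fun X Y : Cplx => ElemExpansion X Y) A B

/-- A Morse sequence from L to K, as W 0, …, W k, consisting of simplicial
complexes, each step an elementary expansion or an elementary filling. -/
def MorseSeq (L K : Cplx) (k : ℕ) (W : ℕ → Cplx) : Prop :=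
  W 0 = L ∧ W k = K ∧ (∀ i ≤ k, IsSimpComplex (W i)) ∧
  ∀ i < k, ElemExpansion (W (i+1)) (W i) ∨ ElemFilling (W (i+1)) (W i)

/-- F is a stack on S: monotone with respect to inclusion. -/
def IsStackOn (S : Cplx) (F : Simplex → ℤ) : Prop :=
  ∀ σ ∈ S, ∀ τ ∈ S, σ ⊆ τ → F σ ≤ F τ

/-- (σ, τ) is a regular pair of the Morse sequence W (of length k). -/
def RegularPair (k : ℕ) (W : ℕ → Cplx) (σ τ : Simplex) : Prop :=
  ∃ i < k, σ ∉ W i ∧ τ ∉ W i ∧ W (i+1) = W i ∪ {σ, τ} ∧ IsFreePair (W (i+1)) σ τ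

/-- An F-sequence: a Morse sequence whose regular pairs satisfy F σ = F τ. -/
def FSeq (F : Simplex → ℤ) (L K : Cplx) (k : ℕ) (W : ℕ → Cplx) : Prop :=
  MorseSeq L K k W ∧ ∀ σ τ : Simplex, RegularPair k W σ τ → F σ = F τ

/-- A flooding sequence: an F-sequence from ∅ to K such that F σ ≤ F τ whenever
σ ∈ K_i and τ ∈ K_j appears strictly later (τ ∉ K_i), with i < j. -/
def Flooding (F : Simplex → ℤ) (K : Cplx) (k : ℕ) (W : ℕ → Cplx) : Prop :=
  FSeq F ∅ K k W ∧
  ∀ i j : ℕ, i < j → j ≤ k → ∀ σ ∈ W i, ∀ τ ∈ W j, τ ∉ W i → F σ ≤ F τ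

/-- Coboundary δ(ν, S) of ν in S. -/
def cob (S : Cplx) (ν : Simplex) : Cplx :=
  S.filter fun μ => ν ⊆ μ ∧ μ.card = ν.card + 1

/-- Boundary ∂(ν, S) of ν in S. -/
def bdry (S : Cplx) (ν : Simplex) : Cplx :=
  S.filter fun η => η ⊆ ν ∧ η.card + 1 = ν.card

def upClosure (K S : Cplx) : Cplx :=
  K.filter fun τ => ∃ σ ∈ S, σ ⊆ τ

theorem mem_upClosure {K S : Cplx} {τ : Simplex} :
    τ ∈ upClosure K S ↔ τ ∈ K ∧ ∃ σ ∈ S, σ ⊆ τ :=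
  mem_filter

theorem isOpenFor_upClosure (K S : Cplx) : IsOpenFor K (upClosure K S) := by
  refine ⟨filter_subset _ _, fun σ hσ τ hτ hστ => ?_⟩
  obtain ⟨-, ρ, hρ, hρσ⟩ := mem_upClosure.1 hσ
  exact mem_upClosure.2 ⟨hτ, ρ, hρ, hρσ.trans hστ⟩

theorem mem_cl {S : Cplx} {τ : Simplex} : τ ∈ cl S ↔ τ.Nonempty ∧ ∃ ρ ∈ S, τ ⊆ ρ := by
  simp only [cl, mem_biUnion, mem_filter, mem_powerset]
  tauto

theorem isSimpComplex_cl (S : Cplx) : IsSimpComplex (cl S) := by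
  refine ⟨fun τ hτ => (mem_cl.1 hτ).1, fun τ hτ σ hστ hσ => ?_⟩
  obtain ⟨-, ρ, hρ, hτρ⟩ := mem_cl.1 hτ
  exact mem_cl.2 ⟨hσ, ρ, hρ, hστ.trans hτρ⟩

theorem IsSimpComplex.cl_subset {K S : Cplx} (hK : IsSimpComplex K) (hS : S ⊆ K) :
    cl S ⊆ K := fun τ hτ => by
  obtain ⟨hτ, ρ, hρ, hτρ⟩ := mem_cl.1 hτ
  exact hK.2 ρ (hS hρ) τ hτρ hτ

theorem IsSimpComplex.isClosedFor_cl {K S : Cplx} (hK : IsSimpComplex K) (hS : S ⊆ K) :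
    IsClosedFor K (cl S) :=
  ⟨hK.cl_subset hS, isSimpComplex_cl S⟩

theorem IsCosimplicial.eq_upClosure_inter_cl {K S : Cplx} (hS : IsCosimplicial S)
    (hK : IsSimpComplex K) (hSK : S ⊆ K) : S = upClosure K S ∩ cl S := by
  ext τ
  rw [mem_inter, mem_upClosure, mem_cl]
  constructor
  · intro hτ
    exact ⟨⟨hSK hτ, τ, hτ, subset_rfl⟩, hK.1 τ (hSK hτ), τ, hτ, subset_rfl⟩
  · rintro ⟨⟨-, σ, hσ, hστ⟩, -, ρ, hρ, hτρ⟩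
    exact hS σ hσ ρ hρ τ hστ hτρ

theorem IsCosimplicial.inter {S T : Cplx} (hS : IsCosimplicial S) (hT : IsCosimplicial T) :
    IsCosimplicial (S ∩ T) := by
  intro σ hσ τ hτ ν hσν hντ
  rw [mem_inter] at hσ hτ ⊢
  exact ⟨hS σ hσ.1 τ hτ.1 ν hσν hντ, hT σ hσ.2 τ hτ.2 ν hσν hντ⟩

theorem IsSimpComplex.isCosimplicial {C : Cplx} (hC : IsSimpComplex C) : IsCosimplicial C :=
  fun σ hσ τ hτ ν hσν hντ => hC.2 τ hτ ν hντ ((hC.1 σ hσ).mono hσν)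

theorem IsOpenFor.isCosimplicial {K U : Cplx} (hU : IsOpenFor K U) (hK : IsSimpComplex K) :
    IsCosimplicial U := fun σ hσ τ hτ ν hσν hντ =>
  hU.2 σ hσ ν (hK.isCosimplicial σ (hU.1 hσ) τ (hU.1 hτ) ν hσν hντ) hσν

theorem cosimplicial_iff_inter_open_closed (K S : Cplx)
    (hK : IsSimpComplex K) (hS : S ⊆ K) :
    IsCosimplicial S ↔ ∃ U C : Cplx, IsOpenFor K U ∧ IsClosedFor K C ∧ S = U ∩ C := by
  constructor
  · intro hcos
    exact ⟨upClosure K S, cl S, isOpenFor_upClosure K S, hK.isClosedFor_cl hS,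
      hcos.eq_upClosure_inter_cl hK hS⟩
  · rintro ⟨U, C, hU, hC, rfl⟩
    exact (hU.isCosimplicial hK).inter hC.2.isCosimplicial
end

section
/- Let F be a stack on K. A vector field V on F is acyclic (contains no non-trivial closed gradient path) if and only if V is the gradient vector field of some Morse sequence on F. -/
open Finset

/-- A vector field on the stack F : pairs (σ, τ) with σ a codimension-1 face of τ
and F σ = F τ, each simplex of K belonging to at most one pair. -/
def IsVectorFieldOn (K : Cplx) (F : Simplex → ℤ) (V : Finset (Simplex × Simplex)) : Prop :=
  (∀ p ∈ V, p.1 ∈ K ∧ p.2 ∈ K ∧ p.1 ⊆ p.2 ∧ p.2.card = p.1.card + 1 ∧ F p.1 = F p.2) ∧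
  (∀ p ∈ V, ∀ q ∈ V, p ≠ q → p.1 ≠ q.1 ∧ p.1 ≠ q.2 ∧ p.2 ≠ q.1 ∧ p.2 ≠ q.2)

/-- V contains a non-trivial closed p-gradient path. -/
def HasNontrivialClosedPath (V : Finset (Simplex × Simplex)) : Prop :=
  ∃ (n : ℕ) (σ τ : ℕ → Simplex), 1 ≤ n ∧ σ 0 = σ n ∧
    ∀ i < n, (σ i, τ i) ∈ V ∧ σ (i+1) ⊆ τ i ∧ σ (i+1) ≠ σ i ∧
      (σ (i+1)).card = (σ i).card

/-!
Along a Morse sequence, when a regular pair `(σ, τ)` is added every other face of `τ` of the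
dimension of `σ` is already present. So the index at which the simplices of a gradient path
enter the sequence strictly decreases along the path, and the path cannot close up.

Conversely, we peel `K` off from the top, by induction on its size. If some simplex of maximal
dimension is critical, it is a facet, which the sequence adds last by a filling. Otherwise every
top simplex `τ` is paired with some `σ`, and one of these pairs is free: if not, `σ` has a second
top coface `τ'`, paired with some `σ' ≠ σ`, and since `σ', τ', σ` is a gradient path, iterating
`σ ↦ σ'` in a finite set produces a closed one. The sequence then adds that free pair last by an
expansion.
-/

noncomputable def entryIndex (W : ℕ → Cplx) (σ : Simplex) : ℕ := sInf {i | σ ∈ W i}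

theorem entryIndex_le {W : ℕ → Cplx} {σ : Simplex} {i : ℕ} (h : σ ∈ W i) : entryIndex W σ ≤ i :=
  Nat.sInf_le h

namespace MorseSeq

variable {L K : Cplx} {k : ℕ} {W : ℕ → Cplx}

theorem subset_succ (hW : MorseSeq L K k W) {i : ℕ} (hi : i < k) : W i ⊆ W (i + 1) := by
  rcases hW.2.2.2 i hi with ⟨σ, τ, -, -, hstep, -⟩ | ⟨ν, -, hstep, -⟩
  · exact hstep ▸ subset_union_left
  · exact hstep ▸ subset_insert _ _

theorem mono (hW : MorseSeq L K k W) {i j : ℕ} (hij : i ≤ j) (hjk : j ≤ k) : W i ⊆ W j := by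
  induction j, hij using Nat.le_induction with
  | base => exact subset_rfl
  | succ j _ ih => exact (ih (by omega)).trans (hW.subset_succ (by omega))

theorem entryIndex_eq (hW : MorseSeq L K k W) {σ : Simplex} {i : ℕ} (hi : i < k)
    (hσi : σ ∉ W i) (hσ : σ ∈ W (i + 1)) : entryIndex W σ = i + 1 := by
  refine le_antisymm (entryIndex_le hσ) (le_csInf ⟨_, hσ⟩ fun j hj => ?_)
  by_contra! hji
  exact hσi (hW.mono (Nat.lt_succ_iff.mp hji) hi.le hj)

theorem entryIndex_lt_of_regularPair (hW : MorseSeq L K k W) {σ τ ρ : Simplex}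
    (hστ : RegularPair k W σ τ) (hρτ : ρ ⊆ τ) (hρσ : ρ ≠ σ) (hcard : ρ.card = σ.card) :
    entryIndex W ρ < entryIndex W σ := by
  obtain ⟨i, hi, hσi, -, hstep, hσ, hτ, hστ, -⟩ := hστ
  have hcomplex := hW.2.2.1 (i + 1) hi
  have hρne : ρ.Nonempty := card_pos.mp (hcard ▸ card_pos.mpr (hcomplex.1 σ hσ))
  have hρτ' : ρ ≠ τ := by
    rintro rfl
    have := card_lt_card hστ
    omega
  have hρi : ρ ∈ W i := by simpa [hstep, hρσ, hρτ'] using hcomplex.2 τ hτ ρ hρτ hρne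
  rw [hW.entryIndex_eq hi hσi hσ]
  exact Nat.lt_succ_of_le (entryIndex_le hρi)

theorem not_hasNontrivialClosedPath {V : Finset (Simplex × Simplex)} (hW : MorseSeq L K k W)
    (hV : ∀ σ τ : Simplex, (σ, τ) ∈ V → RegularPair k W σ τ) :
    ¬ HasNontrivialClosedPath V := by
  rintro ⟨n, σ, τ, hn, hclosed, hpath⟩
  have hanti : StrictAntiOn (fun i => entryIndex W (σ i)) (Set.Iic n) :=
    strictAntiOn_Iic_of_succ_lt fun i hi =>
      have ⟨hV', hsub, hne, hcard⟩ := hpath i hi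
      hW.entryIndex_lt_of_regularPair (hV _ _ hV') hsub hne hcard
  have := hanti (Set.mem_Iic.mpr n.zero_le) Set.self_mem_Iic hn
  simp only [hclosed, lt_self_iff_false] at this

end MorseSeq

def IsExpansionBy (K' K : Cplx) (σ τ : Simplex) : Prop :=
  σ ∉ K ∧ τ ∉ K ∧ K' = K ∪ {σ, τ} ∧ IsFreePair K' σ τ

section Extension

open Function

variable {K K' : Cplx} {k : ℕ} {W : ℕ → Cplx}

theorem MorseSeq.update_succ {L : Cplx} (hW : MorseSeq L K' k W) (hK : IsSimpComplex K)
    (hstep : ElemExpansion K K' ∨ ElemFilling K K') :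
    MorseSeq L K (k + 1) (update W (k + 1) K) := by
  obtain ⟨h0, hk, hcomplex, hsteps⟩ := hW
  refine ⟨by simp [h0], by simp, fun i hi => ?_, fun i hi => ?_⟩
  · rcases hi.lt_or_eq with hi | rfl
    · simpa [update_of_ne hi.ne] using hcomplex i (by omega)
    · simpa using hK
  · rcases (Nat.lt_succ_iff.mp hi).lt_or_eq with hi | rfl
    · simpa [update_of_ne (show i + 1 ≠ k + 1 by omega), update_of_ne (show i ≠ k + 1 by omega)]
        using hsteps i hi
    · simpa [hk] using hstep

theorem regularPair_update_succ_iff {σ τ : Simplex} :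
    RegularPair (k + 1) (update W (k + 1) K) σ τ ↔
      RegularPair k W σ τ ∨ IsExpansionBy K (W k) σ τ := by
  rw [RegularPair, RegularPair, Nat.exists_lt_succ_right]
  refine or_congr (exists_congr fun i => and_congr_right fun hi => ?_) ?_
  · rw [update_of_ne (by omega : i ≠ k + 1), update_of_ne (by omega : i + 1 ≠ k + 1)]
  · rw [update_self, update_of_ne (by omega : k ≠ k + 1), IsExpansionBy]

end Extension

theorem IsExpansionBy.unique {K' K : Cplx} {σ τ σ' τ' : Simplex} (h : IsExpansionBy K K' σ τ)
    (h' : IsExpansionBy K K' σ' τ') : σ' = σ ∧ τ' = τ := by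
  obtain ⟨-, -, rfl, -, -, hστ, -⟩ := h
  obtain ⟨hσ', hτ', hK, -, -, hστ', -⟩ := h'
  have hσ'' : σ' = σ ∨ σ' = τ := by simpa [hσ'] using hK.ge (by simp : σ' ∈ K' ∪ {σ', τ'})
  have hτ'' : τ' = σ ∨ τ' = τ := by simpa [hτ'] using hK.ge (by simp : τ' ∈ K' ∪ {σ', τ'})
  rcases hσ'' with rfl | rfl <;> rcases hτ'' with rfl | rfl
  · exact absurd hστ' (lt_irrefl _)
  · exact ⟨rfl, rfl⟩
  · exact absurd hστ (asymm hστ')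
  · exact absurd hστ' (lt_irrefl _)

theorem ElemFilling.not_isExpansionBy {K' K : Cplx} (h : ElemFilling K K') (σ τ : Simplex) :
    ¬ IsExpansionBy K K' σ τ := by
  obtain ⟨ν, -, rfl, -⟩ := h
  rintro ⟨hσ, hτ, hK, -, -, hστ, -⟩
  have hσν : σ = ν := by simpa [hσ] using hK.ge (by simp : σ ∈ K' ∪ {σ, τ})
  have hτν : τ = ν := by simpa [hτ] using hK.ge (by simp : τ ∈ K' ∪ {σ, τ})
  rw [hσν, hτν] at hστ
  exact lt_irrefl ν hστ

def IsMorseGradient (K : Cplx) (V : Finset (Simplex × Simplex)) : Prop :=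
  ∃ (k : ℕ) (W : ℕ → Cplx), MorseSeq ∅ K k W ∧
    ∀ σ τ : Simplex, ((σ, τ) ∈ V ↔ RegularPair k W σ τ)

theorem isMorseGradient_empty : IsMorseGradient ∅ ∅ :=
  ⟨0, fun _ => ∅, ⟨rfl, rfl, fun _ _ => ⟨by simp, by simp⟩, by simp⟩, by simp [RegularPair]⟩

theorem IsMorseGradient.expand {K' K : Cplx} {V : Finset (Simplex × Simplex)} {σ τ : Simplex}
    (h : IsMorseGradient K' V) (hK : IsSimpComplex K) (hexp : IsExpansionBy K K' σ τ) :
    IsMorseGradient K (insert (σ, τ) V) := by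
  obtain ⟨k, W, hW, hV⟩ := h
  refine ⟨k + 1, Function.update W (k + 1) K, hW.update_succ hK (Or.inl ⟨σ, τ, hexp⟩),
    fun ρ μ => ?_⟩
  rw [regularPair_update_succ_iff, hW.2.1, mem_insert, Prod.mk.injEq, hV, or_comm]
  exact or_congr_right ⟨fun ⟨hρ, hμ⟩ => hρ ▸ hμ ▸ hexp, hexp.unique⟩

theorem IsMorseGradient.fill {K' K : Cplx} {V : Finset (Simplex × Simplex)}
    (h : IsMorseGradient K' V) (hK : IsSimpComplex K) (hfill : ElemFilling K K') :
    IsMorseGradient K V := by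
  obtain ⟨k, W, hW, hV⟩ := h
  refine ⟨k + 1, Function.update W (k + 1) K, hW.update_succ hK (Or.inr hfill), fun ρ μ => ?_⟩
  rw [regularPair_update_succ_iff, hW.2.1, hV, or_iff_left (hfill.not_isExpansionBy ρ μ)]

theorem IsSimpComplex.sdiff {K S : Cplx} (hK : IsSimpComplex K) (hS : IsOpenFor K S) :
    IsSimpComplex (K \ S) := by
  refine ⟨fun τ hτ => hK.1 τ (mem_sdiff.1 hτ).1, fun τ hτ σ hστ hσ => ?_⟩
  obtain ⟨hτK, hτS⟩ := mem_sdiff.1 hτ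
  exact mem_sdiff.2 ⟨hK.2 τ hτK σ hστ hσ, fun hσS => hτS (hS.2 σ hσS τ hτK hστ)⟩

def IsFacet (K : Cplx) (ν : Simplex) : Prop :=
  ν ∈ K ∧ ∀ ρ ∈ K, ν ⊆ ρ → ρ = ν

theorem IsFacet.isOpenFor {K : Cplx} {ν : Simplex} (h : IsFacet K ν) : IsOpenFor K {ν} :=
  ⟨singleton_subset_iff.2 h.1, fun σ hσ τ hτ hστ => by
    rw [mem_singleton] at hσ ⊢
    exact h.2 τ hτ (hσ ▸ hστ)⟩

theorem IsFacet.elemFilling {K : Cplx} {ν : Simplex} (h : IsFacet K ν) :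
    ElemFilling K (K \ {ν}) :=
  ⟨ν, by simp, by rw [sdiff_singleton_eq_erase, insert_erase h.1], h.2⟩

theorem IsFreePair.isOpenFor {K : Cplx} {σ τ : Simplex} (h : IsFreePair K σ τ) :
    IsOpenFor K {σ, τ} := by
  obtain ⟨hσ, hτ, hστ, hfree⟩ := h
  refine ⟨insert_subset hσ (singleton_subset_iff.2 hτ), fun ρ hρ μ hμ hρμ => ?_⟩
  have hσμ : σ ⊆ μ := by
    rcases mem_insert.1 hρ with rfl | hρ
    · exact hρμ
    · exact hστ.subset.trans (mem_singleton.1 hρ ▸ hρμ)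
  rcases eq_or_ne σ μ with rfl | hne
  · exact mem_insert_self _ _
  · exact mem_insert_of_mem (mem_singleton.2 (hfree μ hμ (ssubset_of_subset_of_ne hσμ hne)))

theorem IsFreePair.isExpansionBy_sdiff {K : Cplx} {σ τ : Simplex} (h : IsFreePair K σ τ) :
    IsExpansionBy K (K \ {σ, τ}) σ τ :=
  ⟨by simp, by simp, (sdiff_union_of_subset h.isOpenFor.1).symm, h⟩

theorem IsVectorFieldOn.sdiff {K S : Cplx} {F : Simplex → ℤ} {V V' : Finset (Simplex × Simplex)}
    (hV : IsVectorFieldOn K F V) (hV' : V' ⊆ V) (hS : ∀ p ∈ V', p.1 ∉ S ∧ p.2 ∉ S) :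
    IsVectorFieldOn (K \ S) F V' := by
  refine ⟨fun p hp => ?_, fun p hp q hq => hV.2 p (hV' hp) q (hV' hq)⟩
  obtain ⟨h1, h2, hrest⟩ := hV.1 p (hV' hp)
  exact ⟨mem_sdiff.2 ⟨h1, (hS p hp).1⟩, mem_sdiff.2 ⟨h2, (hS p hp).2⟩, hrest⟩

theorem HasNontrivialClosedPath.mono {V V' : Finset (Simplex × Simplex)}
    (h : HasNontrivialClosedPath V') (hV' : V' ⊆ V) : HasNontrivialClosedPath V := by
  obtain ⟨n, σ, τ, hn, hclosed, hpath⟩ := h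
  exact ⟨n, σ, τ, hn, hclosed, fun i hi => ⟨hV' (hpath i hi).1, (hpath i hi).2⟩⟩

theorem IsVectorFieldOn.of_mem {K : Cplx} {F : Simplex → ℤ} {V : Finset (Simplex × Simplex)}
    (hV : IsVectorFieldOn K F V) {σ τ : Simplex} (h : (σ, τ) ∈ V) :
    σ ∈ K ∧ τ ∈ K ∧ σ ⊆ τ ∧ τ.card = σ.card + 1 ∧ F σ = F τ :=
  hV.1 _ h

theorem exists_closed_chain_of_forall_exists_pred {α : Type*} {s : Finset α}
    {r : α → α → Prop} (hs : s.Nonempty) (h : ∀ a ∈ s, ∃ b ∈ s, r b a) :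
    ∃ n, 1 ≤ n ∧ ∃ f : ℕ → α, f 0 = f n ∧ ∀ i < n, r (f i) (f (i + 1)) := by
  obtain ⟨a, ha⟩ := hs
  choose! g hgs hgr using h
  have hmem : ∀ j, g^[j] a ∈ s := fun j => by
    induction j with
    | zero => exact ha
    | succ j ih => exact Function.iterate_succ_apply' g j a ▸ hgs _ ih
  obtain ⟨p, q, hpq, hpq_eq⟩ := Set.Finite.exists_lt_map_eq_of_forall_mem hmem s.finite_toSet
  -- the backward orbit `g^[q], g^[q-1], …, g^[p]` closes up
  refine ⟨q - p, by omega, fun i => g^[q - i] a, by simp [hpq_eq, Nat.sub_sub_self hpq.le],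
    fun i hi => ?_⟩
  have hqi : q - i = q - (i + 1) + 1 := by omega
  simp only [hqi, Function.iterate_succ_apply']
  exact hgr _ (hmem _)

def GradientStep (V : Finset (Simplex × Simplex)) (σ σ' : Simplex) : Prop :=
  ∃ τ, (σ, τ) ∈ V ∧ σ' ⊆ τ ∧ σ' ≠ σ ∧ σ'.card = σ.card

theorem hasNontrivialClosedPath_of_chain {V : Finset (Simplex × Simplex)} {n : ℕ}
    {f : ℕ → Simplex} (hn : 1 ≤ n) (hclosed : f 0 = f n)
    (hchain : ∀ i < n, GradientStep V (f i) (f (i + 1))) : HasNontrivialClosedPath V := by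
  choose! τ hτ using hchain
  exact ⟨n, f, τ, hn, hclosed, hτ⟩

theorem IsVectorFieldOn.exists_gradientStep_of_not_isFreePair {K : Cplx} {F : Simplex → ℤ}
    {V : Finset (Simplex × Simplex)} (hV : IsVectorFieldOn K F V) {σ τ : Simplex}
    (hστ : (σ, τ) ∈ V) (hmax : ∀ ρ ∈ K, ρ.card ≤ τ.card)
    (hpaired : ∀ ρ ∈ K, ρ.card = τ.card → ∃ σ', (σ', ρ) ∈ V)
    (hnotfree : ¬ IsFreePair K σ τ) :
    ∃ σ' ρ, (σ', ρ) ∈ V ∧ ρ.card = τ.card ∧ GradientStep V σ' σ := by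
  obtain ⟨hσ, hτ, hστ_sub, hστ_card, -⟩ := hV.of_mem hστ
  have hσ_ssub : σ ⊂ τ := ssubset_of_subset_of_ne hστ_sub (by rintro rfl; omega)
  obtain ⟨ρ, hρ, hσρ, hρτ⟩ : ∃ ρ ∈ K, σ ⊂ ρ ∧ ρ ≠ τ := by
    simpa [IsFreePair, hσ, hτ, hσ_ssub] using hnotfree
  have hρ_card : ρ.card = τ.card := le_antisymm (hmax ρ hρ) (by
    have := card_lt_card hσρ
    omega)
  obtain ⟨σ', hσ'ρ⟩ := hpaired ρ hρ hρ_card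
  have hσ'σ : σ ≠ σ' := by
    rintro rfl
    exact (hV.2 _ hσ'ρ _ hστ (by simp [hρτ])).1 rfl
  have hσ'_card := (hV.of_mem hσ'ρ).2.2.2.1
  exact ⟨σ', ρ, hσ'ρ, hρ_card, ρ, hσ'ρ, hσρ.subset, hσ'σ, by omega⟩

theorem exists_isFacet_or_isFreePair {K : Cplx} {F : Simplex → ℤ}
    {V : Finset (Simplex × Simplex)} (hV : IsVectorFieldOn K F V)
    (hacyclic : ¬ HasNontrivialClosedPath V) (hK : K.Nonempty) :
    (∃ ν, IsFacet K ν ∧ ∀ p ∈ V, p.1 ≠ ν ∧ p.2 ≠ ν) ∨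
      ∃ σ τ, (σ, τ) ∈ V ∧ IsFreePair K σ τ := by
  obtain ⟨ν₀, hν₀, hmax⟩ := K.exists_max_image card hK
  by_cases hcrit : ∃ ν ∈ K, ν.card = ν₀.card ∧ ∀ p ∈ V, p.2 ≠ ν
  · obtain ⟨ν, hν, hν_card, hunpaired⟩ := hcrit
    refine .inl ⟨ν, ⟨hν, fun ρ hρ hνρ => ?_⟩, fun p hp => ⟨?_, hunpaired p hp⟩⟩
    · exact (eq_of_subset_of_card_le hνρ (hν_card ▸ hmax ρ hρ)).symm
    · rintro rfl
      have := hmax p.2 (hV.1 p hp).2.1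
      have := (hV.1 p hp).2.2.2.1
      omega
  refine .inr (by_contra fun hnofree => hacyclic ?_)
  push Not at hcrit hnofree
  let s := (V.filter fun p => p.2.card = ν₀.card).image Prod.fst
  have mem_s {σ τ : Simplex} (h : (σ, τ) ∈ V) (hτ : τ.card = ν₀.card) : σ ∈ s :=
    mem_image.2 ⟨_, mem_filter.2 ⟨h, hτ⟩, rfl⟩
  have hpaired : ∀ ρ ∈ K, ρ.card = ν₀.card → ∃ σ, (σ, ρ) ∈ V := fun ρ hρ hρ_card => by
    obtain ⟨p, hp, rfl⟩ := hcrit ρ hρ hρ_card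
    exact ⟨p.1, hp⟩
  have hs : s.Nonempty := by
    obtain ⟨σ, hσ⟩ := hpaired ν₀ hν₀ rfl
    exact ⟨σ, mem_s hσ rfl⟩
  have hpred : ∀ σ ∈ s, ∃ σ' ∈ s, GradientStep V σ' σ := by
    intro σ hσ
    obtain ⟨⟨σ, τ⟩, hp, rfl⟩ := mem_image.1 hσ
    obtain ⟨hστ, hτ_card : τ.card = ν₀.card⟩ := mem_filter.1 hp
    obtain ⟨σ', ρ, hσ'ρ, hρ_card, hstep⟩ := hV.exists_gradientStep_of_not_isFreePair hστ
      (hτ_card ▸ hmax) (hτ_card ▸ hpaired) (hnofree σ τ hστ)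
    exact ⟨σ', mem_s hσ'ρ (hρ_card.trans hτ_card), hstep⟩
  obtain ⟨n, hn, f, hclosed, hchain⟩ := exists_closed_chain_of_forall_exists_pred hs hpred
  exact hasNontrivialClosedPath_of_chain hn hclosed hchain

theorem isMorseGradient_of_not_hasNontrivialClosedPath {K : Cplx} {F : Simplex → ℤ}
    {V : Finset (Simplex × Simplex)} (hK : IsSimpComplex K) (hV : IsVectorFieldOn K F V)
    (hacyclic : ¬ HasNontrivialClosedPath V) : IsMorseGradient K V := by
  induction K using Finset.strongInduction generalizing V with | H K ih => ?_
  rcases K.eq_empty_or_nonempty with rfl | hne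
  · obtain rfl : V = ∅ := eq_empty_of_forall_notMem fun p hp => by simpa using (hV.1 p hp).1
    exact isMorseGradient_empty
  rcases exists_isFacet_or_isFreePair hV hacyclic hne with ⟨ν, hν, hcrit⟩ | ⟨σ, τ, hστ, hfree⟩
  · have hV' : IsVectorFieldOn (K \ {ν}) F V :=
      hV.sdiff subset_rfl fun p hp => by simpa using hcrit p hp
    exact (ih _ (sdiff_ssubset hν.isOpenFor.1 (singleton_nonempty ν)) (hK.sdiff hν.isOpenFor)
      hV' hacyclic).fill hK hν.elemFilling
  · have hV' : IsVectorFieldOn (K \ {σ, τ}) F (V.erase (σ, τ)) :=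
      hV.sdiff (erase_subset _ _) fun p hp => by
        obtain ⟨h1, h2, h3, h4⟩ := hV.2 p (mem_of_mem_erase hp) _ hστ (ne_of_mem_erase hp)
        simp [h1, h2, h3, h4]
    rw [← insert_erase hστ]
    exact (ih _ (sdiff_ssubset hfree.isOpenFor.1 (insert_nonempty σ {τ}))
      (hK.sdiff hfree.isOpenFor) hV' fun h => hacyclic (h.mono (erase_subset _ _))).expand hK
      hfree.isExpansionBy_sdiff

theorem gradient_iff_morse_sequence_general (K : Cplx) (F : Simplex → ℤ)
    (V : Finset (Simplex × Simplex))
    (hK : IsSimpComplex K) (hV : IsVectorFieldOn K F V) :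
    ¬ HasNontrivialClosedPath V ↔
      ∃ (k : ℕ) (W : ℕ → Cplx), FSeq F ∅ K k W ∧
        ∀ σ τ : Simplex, ((σ, τ) ∈ V ↔ RegularPair k W σ τ) := by
  constructor
  · intro hacyclic
    obtain ⟨k, W, hW, hVW⟩ := isMorseGradient_of_not_hasNontrivialClosedPath hK hV hacyclic
    exact ⟨k, W, ⟨hW, fun σ τ h => (hV.of_mem ((hVW σ τ).2 h)).2.2.2.2⟩, hVW⟩
  · rintro ⟨k, W, ⟨hW, -⟩, hVW⟩
    exact hW.not_hasNontrivialClosedPath fun σ τ => (hVW σ τ).1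

theorem gradient_iff_morse_sequence (K : Cplx) (F : Simplex → ℤ)
    (V : Finset (Simplex × Simplex))
    (hK : IsSimpComplex K) (hF : IsStackOn K F) (hV : IsVectorFieldOn K F V) :
    ¬ HasNontrivialClosedPath V ↔
      ∃ (k : ℕ) (W : ℕ → Cplx), FSeq F ∅ K k W ∧
        ∀ σ τ : Simplex, ((σ, τ) ∈ V ↔ RegularPair k W σ τ) :=
  gradient_iff_morse_sequence_general K F V hK hV
end

section
/- Let S be a cosimplicial complex and σ, τ ∈ S with σ ⊂ τ. Then cl(S) \ {σ, τ} is an elementary collapse of cl(S) if and only if S \ {σ, τ} is a reduction of S (i.e., δ(σ, S) = {τ} and the removal is valid). Moreover, (cl(S)\S) ∪ {σ, τ} is an elementary expansion of cl(S)\S if and only if S \ {σ, τ} is a coreduction of S (i.e., ∂(τ, S) = {σ}). -/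
open Finset

/-!
If `σ ⊊ ρ` in a cosimplicial `S`, adding to `σ` any vertex of `ρ \ σ` gives an element of
`δ(σ, S)`; so `δ(σ, S) = {τ}` forces `ρ = τ`. Dually, if `η ⊊ τ`, removing from `τ` any vertex
outside `η` gives an element of `∂(τ, S)`, so `∂(τ, S) = {σ}` forces `η = σ`. Since a cosimplicial
complex is open in its closure, every face of `cl S` containing a face in `S` lies in `S`: this
reduces the free-pair condition in `cl S` to `δ(σ, S)`, and makes `(cl S \ S) ∪ {σ, τ}` closed
under faces exactly when `σ` and `τ` are the only faces of `τ` in `S`.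
-/

lemma mem_cl_iff {S : Cplx} {ν : Simplex} :
    ν ∈ cl S ↔ ν.Nonempty ∧ ∃ μ ∈ S, ν ⊆ μ := by
  simp only [cl, mem_biUnion, mem_filter, mem_powerset]
  tauto

lemma mem_cob {S : Cplx} {ν μ : Simplex} :
    μ ∈ cob S ν ↔ μ ∈ S ∧ ν ⊆ μ ∧ μ.card = ν.card + 1 :=
  mem_filter

lemma mem_bdry {S : Cplx} {ν η : Simplex} :
    η ∈ bdry S ν ↔ η ∈ S ∧ η ⊆ ν ∧ η.card + 1 = ν.card :=
  mem_filter

lemma subset_cl {S : Cplx} (hne : ∀ ν ∈ S, ν.Nonempty) : S ⊆ cl S :=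
  fun ν hν => mem_cl_iff.mpr ⟨hne ν hν, ν, hν, subset_rfl⟩

lemma cl_sdiff_union_subset_cl {S A : Cplx} (hne : ∀ ν ∈ S, ν.Nonempty) (hA : A ⊆ S) :
    cl S \ S ∪ A ⊆ cl S :=
  union_subset sdiff_subset (hA.trans (subset_cl hne))

namespace IsCosimplicial

variable {S : Cplx}

lemma mem_of_mem_cl (hcos : IsCosimplicial S) {ν ρ : Simplex} (hν : ν ∈ S) (hρ : ρ ∈ cl S)
    (hνρ : ν ⊆ ρ) : ρ ∈ S := by
  obtain ⟨-, μ, hμ, hρμ⟩ := mem_cl_iff.mp hρ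
  exact hcos ν hν μ hμ ρ hνρ hρμ

lemma eq_of_cob_eq_singleton (hcos : IsCosimplicial S) {σ τ ρ : Simplex} (hσ : σ ∈ S)
    (hcob : cob S σ = {τ}) (hρ : ρ ∈ S) (hσρ : σ ⊂ ρ) : ρ = τ := by
  have hinsert : ∀ y ∈ ρ, y ∉ σ → insert y σ = τ := by
    intro y hy hyσ
    have hyS : insert y σ ∈ S :=
      hcos σ hσ ρ hρ _ (subset_insert y σ) (insert_subset hy hσρ.subset)
    have hycob : insert y σ ∈ cob S σ :=
      mem_cob.mpr ⟨hyS, subset_insert y σ, card_insert_of_notMem hyσ⟩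
    rwa [hcob, mem_singleton] at hycob
  have hστ : σ ⊆ τ := (mem_cob.mp (hcob ▸ mem_singleton_self τ)).2.1
  obtain ⟨x, hxρ, hxσ⟩ := exists_of_ssubset hσρ
  refine Subset.antisymm (fun y hy => ?_) ?_
  · by_cases hyσ : y ∈ σ
    · exact hστ hyσ
    · exact hinsert y hy hyσ ▸ mem_insert_self y σ
  · rw [← hinsert x hxρ hxσ]
    exact insert_subset hxρ hσρ.subset

lemma eq_of_bdry_eq_singleton (hcos : IsCosimplicial S) {σ τ η : Simplex} (hτ : τ ∈ S)
    (hbdry : bdry S τ = {σ}) (hη : η ∈ S) (hητ : η ⊂ τ) : η = σ := by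
  have herase : ∀ y ∈ τ, y ∉ η → τ.erase y = σ := by
    intro y hy hyη
    have hyS : τ.erase y ∈ S :=
      hcos η hη τ hτ _ (subset_erase.mpr ⟨hητ.subset, hyη⟩) (erase_subset y τ)
    have hybdry : τ.erase y ∈ bdry S τ :=
      mem_bdry.mpr ⟨hyS, erase_subset y τ, card_erase_add_one hy⟩
    rwa [hbdry, mem_singleton] at hybdry
  have hστ : σ ⊆ τ := (mem_bdry.mp (hbdry ▸ mem_singleton_self σ)).2.1
  obtain ⟨x, hxτ, hxη⟩ := exists_of_ssubset hητ
  refine Subset.antisymm ?_ (fun z hz => ?_)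
  · rw [← herase x hxτ hxη]
    exact subset_erase.mpr ⟨hητ.subset, hxη⟩
  · by_contra hzη
    have hzσ := herase z (hστ hz) hzη ▸ hz
    exact notMem_erase z τ hzσ

lemma isSimpComplex_cl_sdiff_union (hcos : IsCosimplicial S) (hne : ∀ ν ∈ S, ν.Nonempty)
    {A : Cplx} (hAS : A ⊆ S)
    (hA : ∀ ν ∈ A, ∀ η ∈ S, η ⊆ ν → η ∈ A) : IsSimpComplex (cl S \ S ∪ A) := by
  have hcl := cl_sdiff_union_subset_cl hne hAS
  refine ⟨fun ν hν => (mem_cl_iff.mp (hcl hν)).1, fun ν hν η hην hη => ?_⟩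
  obtain ⟨-, μ, hμ, hνμ⟩ := mem_cl_iff.mp (hcl hν)
  have hηcl : η ∈ cl S := mem_cl_iff.mpr ⟨hη, μ, hμ, hην.trans hνμ⟩
  by_cases hηS : η ∈ S
  · have hνS : ν ∈ S := hcos.mem_of_mem_cl hηS (hcl hν) hην
    have hνA : ν ∈ A := by simpa [hνS] using hν
    exact mem_union_right _ (hA ν hνA η hηS hην)
  · exact mem_union_left _ (mem_sdiff.mpr ⟨hηcl, hηS⟩)

lemma isFreePair_cl_iff_cob_eq_singleton (hcos : IsCosimplicial S)
    (hne : ∀ ν ∈ S, ν.Nonempty)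
    {σ τ : Simplex} (hσ : σ ∈ S) (hτ : τ ∈ S) (hst : σ ⊂ τ) (hdim : τ.card = σ.card + 1) :
    IsFreePair (cl S) σ τ ↔ cob S σ = {τ} := by
  constructor
  · rintro ⟨-, -, -, hfree⟩
    ext μ
    rw [mem_cob, mem_singleton]
    constructor
    · rintro ⟨hμ, hσμ, hcard⟩
      refine hfree μ (subset_cl hne hμ) (Finset.ssubset_iff_subset_ne.mpr ⟨hσμ, ?_⟩)
      rintro rfl
      omega
    · rintro rfl
      exact ⟨hτ, hst.subset, hdim⟩
  · intro hcob
    refine ⟨subset_cl hne hσ, subset_cl hne hτ, hst, fun ρ hρ hσρ => ?_⟩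
    exact hcos.eq_of_cob_eq_singleton hσ hcob (hcos.mem_of_mem_cl hσ hρ hσρ.subset) hσρ

lemma isSimpComplex_and_isFreePair_iff_bdry_eq_singleton (hcos : IsCosimplicial S)
    (hne : ∀ ν ∈ S, ν.Nonempty)
    {σ τ : Simplex} (hσ : σ ∈ S) (hτ : τ ∈ S) (hst : σ ⊂ τ) (hdim : τ.card = σ.card + 1) :
    (IsSimpComplex (cl S \ S ∪ {σ, τ}) ∧ IsFreePair (cl S \ S ∪ {σ, τ}) σ τ) ↔
      bdry S τ = {σ} := by
  have hpair : {σ, τ} ⊆ S := insert_subset hσ (singleton_subset_iff.mpr hτ)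
  have hmem : ∀ ν ∈ S, ν ∈ cl S \ S ∪ {σ, τ} ↔ ν = σ ∨ ν = τ := by
    intro ν hν
    simp [hν]
  constructor
  · rintro ⟨⟨-, hdown⟩, -⟩
    ext ν
    rw [mem_bdry, mem_singleton]
    constructor
    · rintro ⟨hν, hντ, hcard⟩
      rcases (hmem ν hν).mp (hdown τ (by simp) ν hντ (hne ν hν)) with rfl | rfl
      · rfl
      · omega
    · rintro rfl
      exact ⟨hσ, hst.subset, hdim.symm⟩
  · intro hbdry
    have hfaces : ∀ η ∈ S, η ⊆ τ → η = σ ∨ η = τ := fun η hη hητ =>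
      (eq_or_ssubset_of_subset hητ).symm.imp (hcos.eq_of_bdry_eq_singleton hτ hbdry hη) id
    refine ⟨hcos.isSimpComplex_cl_sdiff_union hne hpair ?_, by simp, by simp, hst, ?_⟩
    · intro ν hν η hη hην
      have hντ : ν ⊆ τ := by
        rcases mem_insert.mp hν with rfl | hν
        · exact hst.subset
        · exact (mem_singleton.mp hν).le
      simpa using hfaces η hη (hην.trans hντ)
    · intro ρ hρ hσρ
      have hρS := hcos.mem_of_mem_cl hσ (cl_sdiff_union_subset_cl hne hpair hρ) hσρ.subset
      rcases (hmem ρ hρS).mp hρ with rfl | rfl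
      · exact absurd hσρ (ssubset_irrefl ρ)
      · rfl

end IsCosimplicial

theorem collapse_iff_reduction_and_expansion_iff_coreduction
    (S : Cplx) (σ τ : Simplex) (hcos : IsCosimplicial S)
    (hne : ∀ ν ∈ S, ν.Nonempty)
    (hσ : σ ∈ S) (hτ : τ ∈ S) (hst : σ ⊂ τ) (hdim : τ.card = σ.card + 1) :
    (IsFreePair (cl S) σ τ ↔ cob S σ = {τ}) ∧
    ((IsSimpComplex ((cl S \ S) ∪ {σ, τ}) ∧ IsFreePair ((cl S \ S) ∪ {σ, τ}) σ τ) ↔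
      bdry S τ = {σ}) :=
  ⟨hcos.isFreePair_cl_iff_cob_eq_singleton hne hσ hτ hst hdim,
    hcos.isSimpComplex_and_isFreePair_iff_bdry_eq_singleton hne hσ hτ hst hdim⟩
end
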